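/- There is an absolute constant C such that for every udpda A' of size m with stack alphabet Γ there exists a normal-form udpda A with stack alphabet Γ, at most C·m control states, and L(A) = L(A'). -/

import Mathlib

/-- The data of a unary pushdown automaton over the input alphabet `{a}`
(a transition whose `Bool` component is `true` reads `a`, otherwise it
reads `ε`): bottom-of-stack symbol, initial state, final states, transitions. -/
structure PrePDA (Q Γ : Type) where
  bot : Γ
  init : Q
  final : Set Q
  δ : Set (Q × Bool × Γ × Q × List Γ)

namespace PrePDA

variable {Q Γ : Type}

/-- Valid stack contents: a word in `(Γ∖{⊥})*⊥`. -/
def IsStack (A : PrePDA Q Γ) (s : List Γ) : Prop :=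
  ∃ s', A.bot ∉ s' ∧ s = s' ++ [A.bot]

/-- A move from configuration `c1` to `c2` reading `a` (if `σ = true`)
or `ε` (if `σ = false`). -/
def Move (A : PrePDA Q Γ) (c1 : Q × List Γ) (σ : Bool) (c2 : Q × List Γ) : Prop :=
  ∃ γ w, (c1.1, σ, γ, c2.1, w) ∈ A.δ ∧
    (((γ ≠ A.bot ∨ w ≠ []) ∧ ∃ s', c1.2 = γ :: s' ∧ c2.2 = w ++ s') ∨
      (γ = A.bot ∧ w = [] ∧ c1.2 = [A.bot] ∧ c2.2 = [A.bot]))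

/-- `Steps A c1 k c2`: there is a finite computation from `c1` to `c2`
reading the word `a^k`. -/
inductive Steps (A : PrePDA Q Γ) : Q × List Γ → ℕ → Q × List Γ → Prop
  | refl (c : Q × List Γ) : Steps A c 0 c
  | tail {c1 : Q × List Γ} {k : ℕ} {c2 : Q × List Γ} {σ : Bool} {c3 : Q × List Γ} :
      Steps A c1 k c2 → A.Move c2 σ c3 → Steps A c1 (k + (if σ then 1 else 0)) c3

/-- The language of the automaton, as a set of natural numbers:
`a^k` is accepted iff `k` is in this set (acceptance by final state,
starting from the configuration `(q₀, ⊥)`). -/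
def lang (A : PrePDA Q Γ) : Set ℕ :=
  {k | ∃ c : Q × List Γ, A.Steps (A.init, [A.bot]) k c ∧ c.1 ∈ A.final}

end PrePDA

/-- A unary deterministic pushdown automaton (udpda): finitely many states and
stack symbols, well-formed transitions (each pushed word has length at most 2,
and the bottom symbol is neither pushed above other symbols nor removed), and
at most one move available at every configuration. -/
structure UDPDA (Q Γ : Type) extends PrePDA Q Γ where
  finQ : Finite Q
  finΓ : Finite Γ
  wf : ∀ q1 σ γ q2 w, (q1, σ, γ, q2, w) ∈ δ →
    w.length ≤ 2 ∧
      ((γ ≠ bot ∧ bot ∉ w) ∨ (γ = bot ∧ (w = [] ∨ ∃ w', bot ∉ w' ∧ w = w' ++ [bot])))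
  det : ∀ c σ1 c1 σ2 c2, toPrePDA.IsStack c.2 →
    toPrePDA.Move c σ1 c1 → toPrePDA.Move c σ2 c2 → σ1 = σ2 ∧ c1 = c2

namespace UDPDA

variable {Q Γ : Type}

/-- The size of a udpda: `|Q| · |Γ|`. -/
noncomputable def size (A : UDPDA Q Γ) : ℕ := Nat.card Q * Nat.card Γ

/-- The language of a udpda. -/
def lang (A : UDPDA Q Γ) : Set ℕ := A.toPrePDA.lang

end UDPDA

/-- The auxiliary alphabet `{a, f}` used in transcripts of computations. -/
inductive AF
  | a
  | f
deriving DecidableEq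

/-- The kind of a control state of a normal-form udpda: internal, push, or pop. -/
inductive StKind
  | internal
  | push
  | pop
deriving DecidableEq

/-- A normal-form udpda: the state set is partitioned (by `kind`) into internal
states `Q₀`, push states `Q₊₁` and pop states `Q₋₁`, with total transition
functions `δint`, `δpush`, `δpop`, and `reads q = true` iff the transitions
from `q` read the input symbol `a` (i.e. `q ∈ R`). -/
structure NFPDA (Q Γ : Type) where
  finQ : Finite Q
  finΓ : Finite Γ
  bot : Γ
  init : Q
  final : Set Q
  kind : Q → StKind
  δint : Q → Q
  δpush : Q → Q × Γ
  δpop : Q → Γ → Q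
  reads : Q → Bool

namespace NFPDA

variable {Q Γ : Type}

/-- Valid stack contents: a word in `(Γ∖{⊥})*⊥`. -/
def IsStack (A : NFPDA Q Γ) (s : List Γ) : Prop :=
  ∃ s', A.bot ∉ s' ∧ s = s' ++ [A.bot]

/-- The unique move available at a configuration.  (A pop transition with the
bottom symbol on top of the stack leaves the stack unchanged; on valid stacks
the bottom symbol is on top exactly when the stack is a singleton.) -/
def step (A : NFPDA Q Γ) : Q × List Γ → Q × List Γ := fun c =>
  match A.kind c.1 with
  | .internal => (A.δint c.1, c.2)
  | .push => ((A.δpush c.1).1, (A.δpush c.1).2 :: c.2)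
  | .pop =>
    match c.2 with
    | [] => (c.1, [])
    | [γ] => (A.δpop c.1 γ, [γ])
    | γ :: s' => (A.δpop c.1 γ, s')

/-- The configuration reached after `k` moves of the unique infinite
computation starting at `c`. -/
def iter (A : NFPDA Q Γ) (c : Q × List Γ) (k : ℕ) : Q × List Γ := A.step^[k] c

open Classical in
/-- The contribution `μ(q)σ` of one move from state `q` to the transcript:
`f` if `q` is final, followed by `a` if the move reads an input symbol. -/
noncomputable def emit (A : NFPDA Q Γ) (q : Q) : List AF :=
  (if q ∈ A.final then [AF.f] else []) ++ (if A.reads q then [AF.a] else [])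

/-- The transcript `μ(q₁)σ₁μ(q₂)σ₂⋯μ(q_k)σ_k` of the first `k` moves of the
computation starting at `c`. -/
noncomputable def transcriptN (A : NFPDA Q Γ) (c : Q × List Γ) (k : ℕ) : List AF :=
  ((List.range k).map fun i => A.emit (A.iter c i).1).flatten

/-- The number of input symbols read during the first `k` moves of the
computation starting at `c`. -/
def readCount (A : NFPDA Q Γ) (c : Q × List Γ) (k : ℕ) : ℕ :=
  ((List.range k).filter fun i => A.reads (A.iter c i).1).length

/-- The language of a normal-form udpda: `a^n` is accepted iff the unique
computation starting at `(q₀, ⊥)` reaches a final state having read exactly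
`n` input symbols. -/
def lang (A : NFPDA Q Γ) : Set ℕ :=
  {n | ∃ k, A.readCount (A.init, [A.bot]) k = n ∧ (A.iter (A.init, [A.bot]) k).1 ∈ A.final}

end NFPDA
/-!
The normal-form machine simulates each move of `A'` by at most three moves.  A pop state
`q` removes the top symbol `γ` (popping `⊥` leaves it in place); the state `(q, γ)` then
makes the move of `A'` from `q` on `γ`, reading what it reads and pushing the at most two
symbols it writes, the upper one from an intermediate push state.  If `A'` has no such
move, `(q, γ)` loops forever without reading.  Only the states `q` are final, and the
normal-form computation passes through them exactly at the configurations of the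
computation of `A'`, so the languages agree; there are `|Q| + 2|Q||Γ| ≤ 3|Q||Γ|` states.
-/

namespace NFPDA

variable {Q Γ : Type} (A : NFPDA Q Γ)

def RunsTo (c : Q × List Γ) (n : ℕ) (c' : Q × List Γ) : Prop :=
  ∃ k, A.iter c k = c' ∧ A.readCount c k = n

lemma iter_succ (c : Q × List Γ) (k : ℕ) : A.iter c (k + 1) = A.step (A.iter c k) :=
  Function.iterate_succ_apply' _ _ _

lemma iter_add (c : Q × List Γ) (k j : ℕ) : A.iter c (k + j) = A.iter (A.iter c k) j := by
  rw [iter, add_comm, Function.iterate_add_apply]; rfl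

@[simp]
lemma readCount_zero (c : Q × List Γ) : A.readCount c 0 = 0 := rfl

lemma readCount_succ (c : Q × List Γ) (k : ℕ) :
    A.readCount c (k + 1) = A.readCount c k + if A.reads (A.iter c k).1 then 1 else 0 := by
  by_cases h : A.reads (A.iter c k).1 <;> simp [readCount, List.range_succ, h]

lemma readCount_add (c : Q × List Γ) (k j : ℕ) :
    A.readCount c (k + j) = A.readCount c k + A.readCount (A.iter c k) j := by
  induction j with
  | zero => simp
  | succ j ih => rw [← add_assoc, readCount_succ, ih, readCount_succ, iter_add, add_assoc]

lemma runsTo_step (c : Q × List Γ) :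
    A.RunsTo c (if A.reads c.1 then 1 else 0) (A.step c) :=
  ⟨1, rfl, by
    show A.readCount c (0 + 1) = _
    rw [readCount_succ, readCount_zero, zero_add]; rfl⟩

variable {A}

lemma RunsTo.trans {c c' c'' : Q × List Γ} {n m : ℕ}
    (h : A.RunsTo c n c') (h' : A.RunsTo c' m c'') : A.RunsTo c (n + m) c'' := by
  obtain ⟨k, rfl, rfl⟩ := h
  obtain ⟨j, rfl, rfl⟩ := h'
  exact ⟨k + j, A.iter_add c k j, A.readCount_add c k j⟩

lemma RunsTo.induction_on {P : ℕ → Q × List Γ → Prop} {c₀ c : Q × List Γ}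
    {n : ℕ} (h : A.RunsTo c₀ n c) (h₀ : P 0 c₀)
    (hstep : ∀ n c, P n c → P (n + if A.reads c.1 then 1 else 0) (A.step c)) : P n c := by
  obtain ⟨k, rfl, rfl⟩ := h
  induction k with
  | zero => exact h₀
  | succ k ih => rw [iter_succ, readCount_succ]; exact hstep _ _ ih

lemma mem_lang_iff {n : ℕ} :
    n ∈ A.lang ↔ ∃ c, A.RunsTo (A.init, [A.bot]) n c ∧ c.1 ∈ A.final :=
  ⟨fun ⟨k, hk, hfin⟩ => ⟨_, ⟨k, rfl, hk⟩, hfin⟩,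
    fun ⟨_, ⟨k, hc, hk⟩, hfin⟩ => ⟨k, hk, hc ▸ hfin⟩⟩

end NFPDA

namespace UDPDA

variable {Q Γ : Type} (A : UDPDA Q Γ)

open Classical in
noncomputable def chosenMove (q : Q) (γ : Γ) : Option (Bool × Q × List Γ) :=
  if h : ∃ t : Bool × Q × List Γ, (q, t.1, γ, t.2.1, t.2.2) ∈ A.δ then some h.choose
  else none

open Classical in
/-- Popping `⊥` leaves it in place, so the `⊥` that ends `w` is not pushed again. -/
noncomputable def pushed (γ : Γ) (w : List Γ) : List Γ :=
  if γ = A.bot then w.dropLast else w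

/-- The two cases are the two pop cases of `NFPDA.step` on a valid stack. -/
def PopsTo (γ : Γ) (s t : List Γ) : Prop :=
  (γ = A.bot ∧ s = [A.bot] ∧ t = [A.bot]) ∨ (γ ≠ A.bot ∧ s = γ :: t ∧ t ≠ [])

variable {A}

lemma chosenMove_mem {q q₂ : Q} {γ : Γ} {σ : Bool} {w : List Γ}
    (h : A.chosenMove q γ = some (σ, q₂, w)) : (q, σ, γ, q₂, w) ∈ A.δ := by
  unfold chosenMove at h
  split_ifs at h with hex
  have := hex.choose_spec
  rwa [Option.some.inj h] at this

lemma exists_chosenMove_eq_some {q q₂ : Q} {γ : Γ} {σ : Bool} {w : List Γ}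
    (h : (q, σ, γ, q₂, w) ∈ A.δ) : ∃ t, A.chosenMove q γ = some t := by
  rw [chosenMove, dif_pos ⟨(σ, q₂, w), h⟩]
  exact ⟨_, rfl⟩

lemma bot_not_mem_pushed {q q₂ : Q} {γ : Γ} {σ : Bool} {w : List Γ}
    (h : A.chosenMove q γ = some (σ, q₂, w)) : A.bot ∉ A.pushed γ w := by
  rcases (A.wf _ _ _ _ _ (chosenMove_mem h)).2 with
    ⟨hγ, hw⟩ | ⟨rfl, rfl | ⟨w', hw', rfl⟩⟩
  · simpa [pushed, hγ] using hw
  · simp [pushed]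
  · simpa [pushed] using hw'

lemma pushed_eq_nil_or_singleton_or_pair {q q₂ : Q} {γ : Γ} {σ : Bool} {w : List Γ}
    (h : A.chosenMove q γ = some (σ, q₂, w)) :
    A.pushed γ w = [] ∨ (∃ x, A.pushed γ w = [x]) ∨ ∃ x y, A.pushed γ w = [x, y] := by
  have hlen : (A.pushed γ w).length ≤ 2 := by
    have := (A.wf _ _ _ _ _ (chosenMove_mem h)).1
    unfold pushed
    split_ifs <;> (try simp only [List.length_dropLast]) <;> omega
  match hw : A.pushed γ w, hlen with
  | [], _ => exact .inl rfl
  | [x], _ => exact .inr (.inl ⟨x, rfl⟩)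
  | [x, y], _ => exact .inr (.inr ⟨x, y, rfl⟩)
  | _ :: _ :: _ :: _, hlen => simp at hlen

lemma exists_popsTo {s : List Γ} (hs : A.IsStack s) : ∃ γ t, A.PopsTo γ s t := by
  obtain ⟨_ | ⟨x, u⟩, hu, rfl⟩ := hs
  · exact ⟨A.bot, [A.bot], .inl ⟨rfl, rfl, rfl⟩⟩
  · exact ⟨x, u ++ [A.bot], .inr ⟨fun hx => hu (by simp [hx]), rfl, by simp⟩⟩

lemma PopsTo.isStack {γ : Γ} {s t : List Γ} (h : A.PopsTo γ s t) (hs : A.IsStack s) :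
    A.IsStack t := by
  rcases h with ⟨-, -, rfl⟩ | ⟨hγ, rfl, -⟩
  · exact ⟨[], by simp, rfl⟩
  · obtain ⟨_ | ⟨x, u⟩, hu, he⟩ := hs
    · exact absurd (List.cons_eq_cons.mp he).1 hγ
    · exact ⟨u, fun h' => hu (by simp [h']), (List.cons_eq_cons.mp he).2⟩

lemma isStack_pushed_append {q q₂ : Q} {γ : Γ} {σ : Bool} {w t : List Γ}
    (h : A.chosenMove q γ = some (σ, q₂, w)) (ht : A.IsStack t) :
    A.IsStack (A.pushed γ w ++ t) := by
  obtain ⟨v, hv, rfl⟩ := ht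
  exact ⟨A.pushed γ w ++ v, by simp [bot_not_mem_pushed h, hv], by simp⟩

lemma move_of_chosenMove {q q₂ : Q} {γ : Γ} {σ : Bool} {w s t : List Γ}
    (h : A.chosenMove q γ = some (σ, q₂, w)) (hpop : A.PopsTo γ s t) :
    A.Move (q, s) σ (q₂, A.pushed γ w ++ t) := by
  have hmem := chosenMove_mem h
  refine ⟨γ, w, hmem, ?_⟩
  rcases hpop with ⟨rfl, rfl, rfl⟩ | ⟨hγ, rfl, -⟩
  · rcases (A.wf _ _ _ _ _ hmem).2 with ⟨hne, -⟩ | ⟨-, rfl | ⟨w', -, rfl⟩⟩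
    · exact absurd rfl hne
    · exact .inr ⟨rfl, rfl, rfl, by simp [pushed]⟩
    · exact .inl ⟨.inr (by simp), [], rfl, by simp [pushed]⟩
  · exact .inl ⟨.inl hγ, t, rfl, by simp [pushed, hγ]⟩

/-- Determinism makes every move of `A` the chosen one. -/
lemma chosenMove_of_move {q : Q} {γ : Γ} {σ : Bool} {c : Q × List Γ} {s t : List Γ}
    (hs : A.IsStack s) (hpop : A.PopsTo γ s t) (hm : A.Move (q, s) σ c) :
    ∃ w, A.chosenMove q γ = some (σ, c.1, w) ∧ c.2 = A.pushed γ w ++ t := by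
  obtain ⟨γ', w', hmem, hbr⟩ := hm
  have hγ' : γ' = γ := by
    rcases hpop with ⟨rfl, rfl, -⟩ | ⟨hγ, rfl, -⟩ <;>
      rcases hbr with ⟨-, s', hs', -⟩ | ⟨rfl, -, hs', -⟩ <;>
      simp_all
  subst hγ'
  obtain ⟨⟨σ₀, q₀, w₀⟩, hsel⟩ := exists_chosenMove_eq_some hmem
  obtain ⟨rfl, hc⟩ := A.det _ _ _ _ _ hs (move_of_chosenMove hsel hpop) ⟨γ', w', hmem, hbr⟩
  exact ⟨w₀, by rw [hsel, ← hc], by rw [← hc]⟩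

lemma isStack_of_move {q : Q} {σ : Bool} {c : Q × List Γ} {s : List Γ}
    (hs : A.IsStack s) (hm : A.Move (q, s) σ c) : A.IsStack c.2 := by
  obtain ⟨γ, t, hpop⟩ := exists_popsTo hs
  obtain ⟨w, hsel, hc⟩ := chosenMove_of_move hs hpop hm
  exact hc ▸ isStack_pushed_append hsel (hpop.isStack hs)

lemma isStack_of_steps {c c' : Q × List Γ} {n : ℕ} (hs : A.IsStack c.2) (h : A.Steps c n c') :
    A.IsStack c'.2 := by
  induction h with
  | refl => exact hs
  | tail _ hm ih => exact isStack_of_move ih hm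

/-- `inl q` pops the top symbol, `inr (inl (q, γ))` performs the move of `A` from `q` on
the popped symbol `γ`, and `inr (inr (q, x))` pushes `x` and enters `inl q`. -/
abbrev NFState (Q Γ : Type) : Type := Q ⊕ (Q × Γ) ⊕ (Q × Γ)

variable (A) in
open Classical in
noncomputable def toNF : NFPDA (NFState Q Γ) Γ where
  finQ := by have := A.finQ; have := A.finΓ; infer_instance
  finΓ := A.finΓ
  bot := A.bot
  init := .inl A.init
  final := Sum.inl '' A.final
  kind
    | .inl _ => .pop
    | .inr (.inr _) => .push
    | .inr (.inl (q, γ)) =>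
        match A.chosenMove q γ with
        | none => .internal
        | some (_, _, w) => if A.pushed γ w = [] then .internal else .push
  δint
    | .inr (.inl (q, γ)) =>
        match A.chosenMove q γ with
        | none => .inr (.inl (q, γ))
        | some (_, q₂, _) => .inl q₂
    | p => p
  δpush
    | .inr (.inr (q, x)) => (.inl q, x)
    | .inr (.inl (q, γ)) =>
        match A.chosenMove q γ with
        | some (_, q₂, w) =>
            match A.pushed γ w with
            | [x] => (.inl q₂, x)
            | x :: y :: _ => (.inr (.inr (q₂, x)), y)
            | _ => (.inl q₂, A.bot)
        | none => (.inr (.inl (q, γ)), γ)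
    | p => (p, A.bot)
  δpop
    | .inl q, γ => .inr (.inl (q, γ))
    | p, _ => p
  reads
    | .inr (.inl (q, γ)) =>
        match A.chosenMove q γ with
        | some (σ, _, _) => σ
        | none => false
    | _ => false

@[simp]
lemma toNF_reads_inl (q : Q) : A.toNF.reads (.inl q) = false := rfl

@[simp]
lemma toNF_reads_inr_inr (p : Q × Γ) : A.toNF.reads (.inr (.inr p)) = false := rfl

lemma toNF_reads_inr_inl_of_none {q : Q} {γ : Γ} (h : A.chosenMove q γ = none) :
    A.toNF.reads (.inr (.inl (q, γ))) = false := by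
  simp [toNF, h]

lemma toNF_reads_inr_inl {q q₂ : Q} {γ : Γ} {σ : Bool} {w : List Γ}
    (h : A.chosenMove q γ = some (σ, q₂, w)) : A.toNF.reads (.inr (.inl (q, γ))) = σ := by
  simp [toNF, h]

lemma toNF_step_inl {q : Q} {γ : Γ} {s t : List Γ} (h : A.PopsTo γ s t) :
    A.toNF.step (.inl q, s) = (.inr (.inl (q, γ)), t) := by
  rcases h with ⟨rfl, rfl, rfl⟩ | ⟨-, rfl, ht⟩
  · rfl
  · obtain ⟨x, t, rfl⟩ := List.exists_cons_of_ne_nil ht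
    rfl

@[simp]
lemma toNF_step_inr_inr (q : Q) (x : Γ) (t : List Γ) :
    A.toNF.step (.inr (.inr (q, x)), t) = (.inl q, x :: t) := rfl

lemma toNF_step_inr_inl_of_none {q : Q} {γ : Γ} (h : A.chosenMove q γ = none) (t : List Γ) :
    A.toNF.step (.inr (.inl (q, γ)), t) = (.inr (.inl (q, γ)), t) := by
  simp [NFPDA.step, toNF, h]

lemma toNF_step_inr_inl_of_pushed_nil {q q₂ : Q} {γ : Γ} {σ : Bool} {w : List Γ}
    (h : A.chosenMove q γ = some (σ, q₂, w)) (hw : A.pushed γ w = []) (t : List Γ) :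
    A.toNF.step (.inr (.inl (q, γ)), t) = (.inl q₂, t) := by
  simp [NFPDA.step, toNF, h, hw]

lemma toNF_step_inr_inl_of_pushed_singleton {q q₂ : Q} {γ x : Γ} {σ : Bool} {w : List Γ}
    (h : A.chosenMove q γ = some (σ, q₂, w)) (hw : A.pushed γ w = [x]) (t : List Γ) :
    A.toNF.step (.inr (.inl (q, γ)), t) = (.inl q₂, x :: t) := by
  simp [NFPDA.step, toNF, h, hw]

lemma toNF_step_inr_inl_of_pushed_pair {q q₂ : Q} {γ x y : Γ} {σ : Bool} {w : List Γ}
    (h : A.chosenMove q γ = some (σ, q₂, w)) (hw : A.pushed γ w = [x, y]) (t : List Γ) :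
    A.toNF.step (.inr (.inl (q, γ)), t) = (.inr (.inr (q₂, x)), y :: t) := by
  simp [NFPDA.step, toNF, h, hw]

lemma toNF_runsTo_of_chosenMove {q q₂ : Q} {γ : Γ} {σ : Bool} {w : List Γ}
    (h : A.chosenMove q γ = some (σ, q₂, w)) (t : List Γ) :
    A.toNF.RunsTo (.inr (.inl (q, γ)), t) (if σ then 1 else 0)
      (.inl q₂, A.pushed γ w ++ t) := by
  have hrun := A.toNF.runsTo_step (.inr (.inl (q, γ)), t)
  rw [toNF_reads_inr_inl h] at hrun
  rcases pushed_eq_nil_or_singleton_or_pair h with hw | ⟨x, hw⟩ | ⟨x, y, hw⟩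
  · rw [toNF_step_inr_inl_of_pushed_nil h hw] at hrun
    simpa [hw] using hrun
  · rw [toNF_step_inr_inl_of_pushed_singleton h hw] at hrun
    simpa [hw] using hrun
  · rw [toNF_step_inr_inl_of_pushed_pair h hw] at hrun
    simpa [hw] using hrun.trans (A.toNF.runsTo_step (.inr (.inr (q₂, x)), y :: t))

lemma toNF_runsTo_of_move {c c' : Q × List Γ} {σ : Bool} (hs : A.IsStack c.2)
    (hm : A.Move c σ c') :
    A.toNF.RunsTo (.inl c.1, c.2) (if σ then 1 else 0) (.inl c'.1, c'.2) := by
  obtain ⟨γ, t, hpop⟩ := exists_popsTo hs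
  obtain ⟨w, hsel, hc⟩ := chosenMove_of_move hs hpop hm
  have hrun := A.toNF.runsTo_step (.inl c.1, c.2)
  rw [toNF_step_inl hpop] at hrun
  simpa [hc] using hrun.trans (toNF_runsTo_of_chosenMove hsel t)

lemma toNF_runsTo_of_steps {c c' : Q × List Γ} {n : ℕ} (h : A.Steps c n c')
    (hs : A.IsStack c.2) : A.toNF.RunsTo (.inl c.1, c.2) n (.inl c'.1, c'.2) := by
  induction h with
  | refl => exact ⟨0, rfl, rfl⟩
  | tail hsteps hm ih => exact ih.trans (toNF_runsTo_of_move (isStack_of_steps hs hsteps) hm)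

variable (A) in
/-- `c` is a configuration of `A.toNF` in the middle of simulating a configuration of `A`
reached by reading `a^n`. -/
def Reached (n : ℕ) : NFState Q Γ × List Γ → Prop
  | (.inl q, s) => A.Steps (A.init, [A.bot]) n (q, s)
  | (.inr (.inl (q, γ)), t) => ∃ s, A.Steps (A.init, [A.bot]) n (q, s) ∧ A.PopsTo γ s t
  | (.inr (.inr (q, x)), t) => A.Steps (A.init, [A.bot]) n (q, x :: t)

lemma Reached.step {n : ℕ} {c : NFState Q Γ × List Γ} (h : A.Reached n c) :
    A.Reached (n + if A.toNF.reads c.1 then 1 else 0) (A.toNF.step c) := by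
  match c, h with
  | (.inl q, s), h =>
      obtain ⟨γ, t, hpop⟩ := exists_popsTo (isStack_of_steps ⟨[], by simp, rfl⟩ h)
      rw [toNF_step_inl hpop]
      exact ⟨s, h, hpop⟩
  | (.inr (.inl (q, γ)), t), ⟨s, hsteps, hpop⟩ =>
      cases hsel : A.chosenMove q γ with
      | none =>
          rw [toNF_step_inr_inl_of_none hsel, toNF_reads_inr_inl_of_none hsel]
          exact ⟨s, hsteps, hpop⟩
      | some m =>
          obtain ⟨σ, q₂, w⟩ := m
          have hnext := hsteps.tail (move_of_chosenMove hsel hpop)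
          rw [toNF_reads_inr_inl hsel]
          rcases pushed_eq_nil_or_singleton_or_pair hsel with hw | ⟨x, hw⟩ | ⟨x, y, hw⟩
          · rw [toNF_step_inr_inl_of_pushed_nil hsel hw]
            simpa [hw, Reached] using hnext
          · rw [toNF_step_inr_inl_of_pushed_singleton hsel hw]
            simpa [hw, Reached] using hnext
          · rw [toNF_step_inr_inl_of_pushed_pair hsel hw]
            simpa [hw, Reached] using hnext
  | (.inr (.inr (q, x)), t), h => simpa [Reached] using h

theorem lang_toNF : A.toNF.lang = A.lang := by
  ext n
  rw [NFPDA.mem_lang_iff]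
  constructor
  · rintro ⟨⟨q | _ | _, s⟩, hrun, hfin⟩
    · have hq : A.Reached n (.inl q, s) :=
        hrun.induction_on (P := A.Reached) (PrePDA.Steps.refl _) fun _ _ => Reached.step
      exact ⟨(q, s), hq, by simpa [toNF] using hfin⟩
    all_goals simp [toNF] at hfin
  · rintro ⟨c, hsteps, hfin⟩
    exact ⟨_, toNF_runsTo_of_steps hsteps ⟨[], by simp, rfl⟩, c.1, hfin, rfl⟩

lemma card_nfState_le : Nat.card (NFState Q Γ) ≤ 3 * A.size := by
  have := A.finQ
  have := A.finΓ
  have : Nonempty Γ := ⟨A.bot⟩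
  have hQ : Nat.card Q ≤ Nat.card Q * Nat.card Γ := Nat.le_mul_of_pos_right _ Nat.card_pos
  simp only [NFState, Nat.card_sum, Nat.card_prod, size]
  omega

end UDPDA

/-- There is an absolute constant `C` such that every udpda
`A'` of size `m` with stack alphabet `Γ` admits an equivalent normal-form
udpda with the same stack alphabet `Γ` and at most `C·m` control states. -/
theorem udpda_normal_form :
    ∃ C : ℕ, ∀ (Q Γ : Type) (A' : UDPDA Q Γ),
      ∃ (Q' : Type) (A : NFPDA Q' Γ),
        Nat.card Q' ≤ C * A'.size ∧ A.lang = A'.lang :=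
  ⟨3, fun _ _ A' => ⟨_, A'.toNF, A'.card_nfState_le, A'.lang_toNF⟩⟩
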